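/- Let d ≥ 2 and G : ℝᵈ → ℝ with G ∈ L¹(ℝᵈ) and |x|G(x) ∈ L¹(ℝᵈ), and let a ∈ ℝ. If Ĝ(p) = 0 for all p on the sphere |p| = e^a, then N_a := ‖Ĝ(p)/ln(|p|/e^a)‖_{L^∞(ℝᵈ)} < ∞. -/

import Mathlib

set_option maxHeartbeats 1000000

open MeasureTheory Real Filter
open scoped ENNReal Topology

/-- Fourier transform with normalization `(2π)^{-d/2} ∫ G(x) e^{-ip·x} dx`. -/
noncomputable def ft (d : ℕ) (G : EuclideanSpace ℝ (Fin d) → ℝ)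
    (p : EuclideanSpace ℝ (Fin d)) : ℂ :=
  ((2 * Real.pi) ^ (-(d : ℝ) / 2) : ℝ) *
    ∫ x, (G x : ℂ) * Complex.exp (-Complex.I * ((inner ℝ p x : ℝ) : ℂ))

lemma norm_exp_neg_I_mul (s : ℝ) : ‖Complex.exp (-Complex.I * (s : ℂ))‖ = 1 := by
  rw [Complex.norm_exp]
  simp

lemma exp_neg_I_lip (s t : ℝ) :
    ‖Complex.exp (-Complex.I * (s : ℂ)) - Complex.exp (-Complex.I * (t : ℂ))‖ ≤ |s - t| := by
  have hderiv : ∀ u : ℝ, HasDerivAt (fun r : ℝ => Complex.exp (-Complex.I * (r : ℂ)))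
      (Complex.exp (-Complex.I * (u : ℂ)) * (-Complex.I)) u := by
    intro u
    have h1 : HasDerivAt (fun r : ℝ => ((r : ℂ))) 1 u := Complex.ofRealCLM.hasDerivAt
    have h2 : HasDerivAt (fun r : ℝ => (-Complex.I * (r : ℂ))) (-Complex.I) u := by
      simpa using h1.const_mul (-Complex.I)
    simpa using h2.cexp
  have hb : ∀ u : ℝ, u ∈ (Set.univ : Set ℝ) →
      ‖Complex.exp (-Complex.I * (u : ℂ)) * (-Complex.I)‖ ≤ 1 := by
    intro u _
    rw [norm_mul, norm_exp_neg_I_mul]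
    simp
  have := Convex.norm_image_sub_le_of_norm_hasDerivWithin_le
    (f := fun r : ℝ => Complex.exp (-Complex.I * (r : ℂ)))
    (f' := fun u : ℝ => Complex.exp (-Complex.I * (u : ℂ)) * (-Complex.I))
    (fun u _ => (hderiv u).hasDerivWithinAt) hb convex_univ
    (Set.mem_univ t) (Set.mem_univ s)
  simpa [Real.norm_eq_abs] using this

/-- for `d ≥ 2`, `G, |x|G ∈ L¹(ℝᵈ)` and `Ĝ` vanishing on the
sphere `|p| = e^a`, the quotient `Ĝ(p)/ln(|p|/e^a)` is bounded. -/
theorem stmt4 (d : ℕ) (hd : 2 ≤ d) (G : EuclideanSpace ℝ (Fin d) → ℝ)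
    (hG : Integrable G (volume : Measure (EuclideanSpace ℝ (Fin d))))
    (hxG : Integrable (fun x => ‖x‖ * G x)
      (volume : Measure (EuclideanSpace ℝ (Fin d)))) (a : ℝ)
    (horth : ∀ p : EuclideanSpace ℝ (Fin d), ‖p‖ = Real.exp a → ft d G p = 0) :
    ∃ C : ℝ, ∀ p : EuclideanSpace ℝ (Fin d),
      ‖ft d G p / ((Real.log (‖p‖ / Real.exp a) : ℝ) : ℂ)‖ ≤ C := by
  set c : ℝ := (2 * Real.pi) ^ (-(d : ℝ) / 2) with hc
  have hc0 : 0 < c := Real.rpow_pos_of_pos (by positivity) _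
  set M : ℝ := ∫ x, ‖G x‖ with hM
  set B : ℝ := ∫ x, ‖x‖ * ‖G x‖ with hB
  have hM0 : 0 ≤ M := integral_nonneg fun x => norm_nonneg _
  clear_value M
  have hBint : Integrable (fun x => ‖x‖ * ‖G x‖)
      (volume : Measure (EuclideanSpace ℝ (Fin d))) := by
    simpa [norm_mul, abs_of_nonneg (norm_nonneg _), Real.norm_eq_abs] using hxG.norm
  have hB0 : 0 ≤ B := integral_nonneg fun x => by positivity
  clear_value B
  -- integrability of the integrand
  have hInt : ∀ p : EuclideanSpace ℝ (Fin d),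
      Integrable (fun x => (G x : ℂ) * Complex.exp (-Complex.I * ((inner ℝ p x : ℝ) : ℂ)))
        (volume : Measure (EuclideanSpace ℝ (Fin d))) := by
    intro p
    have hcont : Continuous fun x : EuclideanSpace ℝ (Fin d) =>
        Complex.exp (-Complex.I * ((inner ℝ p x : ℝ) : ℂ)) := by
      have hinner : Continuous fun x : EuclideanSpace ℝ (Fin d) => (inner ℝ p x : ℝ) :=
        continuous_const.inner continuous_id
      exact Complex.continuous_exp.comp
        (continuous_const.mul (Complex.continuous_ofReal.comp hinner))
    refine (Integrable.mono' hG.norm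
      ((Complex.continuous_ofReal.comp_aestronglyMeasurable hG.1).mul
        hcont.aestronglyMeasurable) ?_)
    filter_upwards with x
    rw [norm_mul, norm_exp_neg_I_mul, mul_one, Complex.norm_real]
  -- global bound
  have hbound : ∀ p, ‖ft d G p‖ ≤ c * M := by
    intro p
    rw [ft, norm_mul, Complex.norm_real, Real.norm_eq_abs, abs_of_pos hc0, hM]
    gcongr
    refine norm_integral_le_of_norm_le hG.norm ?_
    filter_upwards with x
    rw [norm_mul, norm_exp_neg_I_mul, mul_one, Complex.norm_real]
  -- Lipschitz-type bound near the sphere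
  have hlip : ∀ p : EuclideanSpace ℝ (Fin d), p ≠ 0 →
      ‖ft d G p‖ ≤ c * B * |‖p‖ - Real.exp a| := by
    intro p hp
    have hpn : (0 : ℝ) < ‖p‖ := norm_pos_iff.2 hp
    set q : EuclideanSpace ℝ (Fin d) := (Real.exp a / ‖p‖) • p with hq
    have hqn : ‖q‖ = Real.exp a := by
      rw [hq, norm_smul, Real.norm_eq_abs, abs_of_pos (by positivity),
        div_mul_cancel₀ _ hpn.ne']
    have hpq : ‖p - q‖ = |‖p‖ - Real.exp a| := by
      have : p - q = (1 - Real.exp a / ‖p‖) • p := by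
        rw [hq, sub_smul, one_smul]
      rw [this, norm_smul, Real.norm_eq_abs, ← abs_of_pos hpn, ← abs_mul,
        abs_of_pos hpn, sub_mul, one_mul, div_mul_cancel₀ _ hpn.ne']
    have hftq : ft d G q = 0 := horth q hqn
    have key : ft d G p = (c : ℂ) * ∫ x, (G x : ℂ) *
        (Complex.exp (-Complex.I * ((inner ℝ p x : ℝ) : ℂ))
          - Complex.exp (-Complex.I * ((inner ℝ q x : ℝ) : ℂ))) := by
      have : ft d G p = ft d G p - ft d G q := by rw [hftq, sub_zero]
      rw [this, ft, ft, ← mul_sub, ← integral_sub (hInt p) (hInt q)]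
      congr 1
      refine integral_congr_ae (Filter.Eventually.of_forall fun x => ?_)
      ring
    rw [key, norm_mul, Complex.norm_real, Real.norm_eq_abs, abs_of_pos hc0,
      mul_assoc]
    gcongr
    have hend : ∫ x, ‖x‖ * ‖G x‖ * |‖p‖ - Real.exp a| = B * |‖p‖ - Real.exp a| := by
      rw [integral_mul_const, hB]
    rw [← hend]
    refine norm_integral_le_of_norm_le (hBint.mul_const _) ?_
    filter_upwards with x
    rw [norm_mul, Complex.norm_real, Real.norm_eq_abs]
    have h1 : ‖Complex.exp (-Complex.I * ((inner ℝ p x : ℝ) : ℂ))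
        - Complex.exp (-Complex.I * ((inner ℝ q x : ℝ) : ℂ))‖
        ≤ |(inner ℝ p x : ℝ) - (inner ℝ q x : ℝ)| := exp_neg_I_lip _ _
    have h2 : |(inner ℝ p x : ℝ) - (inner ℝ q x : ℝ)| ≤ ‖p - q‖ * ‖x‖ := by
      rw [← inner_sub_left]
      exact abs_real_inner_le_norm _ _
    calc |G x| * ‖Complex.exp (-Complex.I * ((inner ℝ p x : ℝ) : ℂ))
        - Complex.exp (-Complex.I * ((inner ℝ q x : ℝ) : ℂ))‖
        ≤ |G x| * (‖p - q‖ * ‖x‖) := by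
          exact mul_le_mul_of_nonneg_left (h1.trans h2) (abs_nonneg _)
      _ = ‖x‖ * ‖G x‖ * |‖p‖ - Real.exp a| := by
          rw [hpq]; rw [Real.norm_eq_abs]; ring
  -- conclude
  refine ⟨max (c * M) (2 * Real.exp a * (c * B)), fun p => ?_⟩
  set t : ℝ := Real.log (‖p‖ / Real.exp a) with ht
  by_cases ht0 : t = 0
  · rw [ht0]
    simp only [Complex.ofReal_zero, div_zero, norm_zero]
    exact le_max_of_le_left (mul_nonneg hc0.le hM0)
  · have hpn : p ≠ 0 := by
      intro h
      apply ht0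
      rw [ht, h]
      simp
    have hppos : (0 : ℝ) < ‖p‖ := norm_pos_iff.2 hpn
    have hexp : Real.exp t = ‖p‖ / Real.exp a := by
      rw [ht, Real.exp_log (by positivity)]
    have habs : (0 : ℝ) < |t| := abs_pos.2 ht0
    rw [norm_div, Complex.norm_real, Real.norm_eq_abs, div_le_iff₀ habs]
    rcases le_or_gt |t| 1 with h1 | h1
    · -- near the sphere
      have hdiff : |‖p‖ - Real.exp a| ≤ Real.exp a * (2 * |t|) := by
        have : ‖p‖ - Real.exp a = Real.exp a * (Real.exp t - 1) := by
          rw [hexp]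
          field_simp
        rw [this, abs_mul, abs_of_pos (Real.exp_pos a)]
        exact mul_le_mul_of_nonneg_left (Real.abs_exp_sub_one_le h1) (Real.exp_pos a).le
      calc ‖ft d G p‖ ≤ c * B * |‖p‖ - Real.exp a| := hlip p hpn
        _ ≤ c * B * (Real.exp a * (2 * |t|)) := by
            exact mul_le_mul_of_nonneg_left hdiff (mul_nonneg hc0.le hB0)
        _ = 2 * Real.exp a * (c * B) * |t| := by ring
        _ ≤ max (c * M) (2 * Real.exp a * (c * B)) * |t| := by
            exact mul_le_mul_of_nonneg_right (le_max_right _ _) habs.le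
    · -- far from the sphere
      calc ‖ft d G p‖ ≤ c * M := hbound p
        _ = c * M * 1 := (mul_one _).symm
        _ ≤ max (c * M) (2 * Real.exp a * (c * B)) * |t| := by
            exact mul_le_mul (le_max_left _ _) h1.le zero_le_one (le_max_of_le_left (mul_nonneg hc0.le hM0))
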